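/- arXiv:1510.07000 — 2 statements merged into one kernel-verified Lean document; each statement's English description precedes it below -/
import Mathlib

section
/- Let p be a prime with p > 3, let h, M0 be positive integers with q = p^h, and suppose p^{2hM0} is sufficiently large. Then there exists a Sidon set S in the additive group G = {f ∈ F_q[t] : deg f < 4M0} such that every g ∈ G can be written as g = s1 + s2 + s3 with s1, s2, s3 ∈ S pairwise distinct. -/
/-!
Identify `G` additively with `K × K`, where `K` is the field with `p ^ (2 h M0)` elements; both are
elementary abelian `p`-groups of the same order. Take `S` to be the parabola `{(x, x²)}`. Since
`char K ≠ 2`, a difference `(x₁ - x₂, x₁² - x₂²)` with `x₁ ≠ x₂` determines `x₁ - x₂` and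
`x₁ + x₂`, so `S` is Sidon. Writing `(u, v)` as a sum of three points of `S` means solving
`x + y + z = u`, `x² + y² + z² = v`; after centring at `u / 3` this becomes
`a² + ab + b² = c`, which splits into linear factors because `-3` is a square in `K` (it lies in the
prime field and `[K : 𝔽_p]` is even). This leaves one free parameter, and at most seven of its
values are forbidden by distinctness.
-/

open Polynomial

theorem CharP.natCast_ne_zero_of_lt {R : Type*} [AddMonoidWithOne R] (p : ℕ) [CharP R p] {m : ℕ}
    (h0 : 0 < m) (hm : m < p) : (m : R) ≠ 0 :=
  (CharP.cast_eq_zero_iff R p m).not.2 (Nat.not_dvd_of_pos_of_lt h0 hm)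

theorem Polynomial.natCard_degreeLT (R : Type*) [CommRing R] (n : ℕ) :
    Nat.card (degreeLT R n) = Nat.card R ^ n := by
  rw [Nat.card_congr (degreeLTEquiv R n).toEquiv, Nat.card_fun, Nat.card_fin]

theorem ZMod.nonempty_addEquiv_of_natCard_eq (p : ℕ) [Fact p.Prime] {A B : Type*}
    [AddCommGroup A] [AddCommGroup B] [Module (ZMod p) A] [Module (ZMod p) B] [Finite A]
    [Finite B] (h : Nat.card A = Nat.card B) : Nonempty (A ≃+ B) := by
  have hrank : Module.finrank (ZMod p) A = Module.finrank (ZMod p) B :=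
    Nat.pow_right_injective (Fact.out : p.Prime).two_le <| by
      simp only [FiniteField.pow_finrank_eq_natCard, h]
  exact ⟨(FiniteDimensional.nonempty_linearEquiv_of_finrank_eq hrank).some.toAddEquiv⟩

section Sidon

variable {G H : Type*}

def IsSidon [AddGroup G] (S : Set G) : Prop :=
  ∀ a ∈ S, ∀ b ∈ S, ∀ c ∈ S, ∀ d ∈ S, a - b = c - d → a - b ≠ 0 → a = c ∧ b = d

def IsSumOfThreeDistinct [Add G] (S : Set G) (g : G) : Prop :=
  ∃ s1 ∈ S, ∃ s2 ∈ S, ∃ s3 ∈ S, s1 ≠ s2 ∧ s1 ≠ s3 ∧ s2 ≠ s3 ∧ s1 + s2 + s3 = g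

variable [AddGroup G] [AddGroup H] {S : Set G} {f : G →+ H}

theorem IsSidon.image (hS : IsSidon S) (hf : Function.Injective f) : IsSidon (f '' S) := by
  rintro _ ⟨a, ha, rfl⟩ _ ⟨b, hb, rfl⟩ _ ⟨c, hc, rfl⟩ _ ⟨d, hd, rfl⟩ heq hne
  simp only [← map_sub] at heq hne
  obtain ⟨rfl, rfl⟩ := hS a ha b hb c hc d hd (hf heq) (fun h => hne (by rw [h, map_zero]))
  exact ⟨rfl, rfl⟩

theorem IsSumOfThreeDistinct.image {g : G} (hg : IsSumOfThreeDistinct S g)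
    (hf : Function.Injective f) : IsSumOfThreeDistinct (f '' S) (f g) := by
  obtain ⟨s1, h1, s2, h2, s3, h3, h12, h13, h23, rfl⟩ := hg
  exact ⟨f s1, ⟨s1, h1, rfl⟩, f s2, ⟨s2, h2, rfl⟩, f s3, ⟨s3, h3, rfl⟩,
    hf.ne h12, hf.ne h13, hf.ne h23, by simp only [map_add]⟩

end Sidon

def parabola (K : Type*) [Field K] : Set (K × K) := Set.range fun x => (x, x ^ 2)

theorem isSidon_parabola {K : Type*} [Field K] (h2 : (2 : K) ≠ 0) : IsSidon (parabola K) := by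
  rintro _ ⟨x1, rfl⟩ _ ⟨x2, rfl⟩ _ ⟨x3, rfl⟩ _ ⟨x4, rfl⟩ heq hne
  simp only [Prod.mk_sub_mk, Prod.mk.injEq, ne_eq, Prod.mk_eq_zero, not_and] at heq hne
  obtain ⟨hd1, hd2⟩ := heq
  have h12 : x1 - x2 ≠ 0 := fun h => hne h (by linear_combination (x1 + x2) * h)
  have hs : x1 + x2 = x3 + x4 :=
    mul_left_cancel₀ h12 (by linear_combination hd2 - (x3 + x4) * hd1)
  obtain rfl : x1 = x3 := mul_left_cancel₀ h2 (by linear_combination hs + hd1)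
  obtain rfl : x2 = x4 := by linear_combination -hd1
  exact ⟨rfl, rfl⟩

theorem FiniteField.isSquare_of_pow_eq_self {K : Type*} [Field K] [Finite K] {p k : ℕ}
    (hp : Odd p) (hcard : Nat.card K = p ^ (2 * k)) {x : K} (hx : x ^ p = x) :
    IsSquare x := by
  rcases eq_or_ne x 0 with rfl | hx0
  · exact IsSquare.zero
  have := Fintype.ofFinite K
  rw [← Fintype.card_eq_nat_card] at hcard
  obtain ⟨r, rfl⟩ := hp
  -- `card K / 2 = (p ^ (2 k) - 1) / 2` is a multiple of `p - 1 = 2 r`, and `x ^ (p - 1) = 1`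
  obtain ⟨d, hd⟩ : 2 * (2 * r) ∣ (2 * r + 1) ^ (2 * k) - 1 := by
    refine Nat.dvd_trans (b := (2 * r + 1) ^ 2 - 1) ⟨r + 1, Nat.sub_eq_of_eq_add (by ring)⟩ ?_
    simpa [pow_mul] using Nat.sub_dvd_pow_sub_pow ((2 * r + 1) ^ 2) 1 k
  have hpos : 0 < (2 * r + 1) ^ (2 * k) := by positivity
  have hhalf : Fintype.card K / 2 = 2 * r * d := by
    rw [hcard]
    rw [mul_assoc] at hd
    omega
  have hunit : x ^ (2 * r) = 1 := mul_right_cancel₀ hx0 (by rw [← pow_succ, hx, one_mul])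
  refine (FiniteField.isSquare_iff ?_ hx0).2 (by rw [hhalf, pow_mul, hunit, one_pow])
  rw [Ne, FiniteField.even_card_iff_char_two, hcard]
  have := Nat.odd_iff.1 ((show Odd (2 * r + 1) from ⟨r, rfl⟩).pow (n := 2 * k))
  omega

theorem exists_ne_zero_sq_notMem {K : Type*} [Field K] [Finite K] (T : Finset K)
    (hT : 2 * T.card + 1 < Nat.card K) : ∃ n : K, n ≠ 0 ∧ n ^ 2 ∉ T := by
  have hmonic : ∀ t ∈ T, (X ^ 2 - C t).Monic := fun t _ => monic_X_pow_sub_C t two_ne_zero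
  have hprod := monic_prod_of_monic _ _ hmonic
  have hdeg : (X * ∏ t ∈ T, (X ^ 2 - C t)).natDegree < Cardinal.mk K := by
    rw [monic_X.natDegree_mul hprod, natDegree_prod_of_monic _ _ hmonic, ← Nat.cast_card]
    simp only [natDegree_X, natDegree_X_pow_sub_C, Finset.sum_const, smul_eq_mul]
    exact_mod_cast (by omega : 1 + T.card * 2 < Nat.card K)
  obtain ⟨n, hn⟩ := exists_eval_ne_zero_of_natDegree_lt_card _ (monic_X.mul hprod).ne_zero hdeg
  simp only [eval_mul, eval_X, eval_prod, eval_sub, eval_pow, eval_C, mul_ne_zero_iff,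
    Finset.prod_ne_zero_iff, sub_ne_zero] at hn
  exact ⟨n, hn.1, fun h => hn.2 _ h rfl⟩

theorem exists_sq_add_mul_add_sq_eq {K : Type*} [Field K] [Finite K] (h2 : (2 : K) ≠ 0)
    (h3 : (3 : K) ≠ 0) (hsq : IsSquare (-3 : K)) (hcard : 8 ≤ Nat.card K) (c : K) :
    ∃ a b : K, a ^ 2 + a * b + b ^ 2 = c ∧ a ≠ b ∧ 2 * a + b ≠ 0 ∧ a + 2 * b ≠ 0 := by
  classical
  obtain ⟨θ, hθ⟩ := hsq
  have hθ0 : θ ≠ 0 := by rintro rfl; exact h3 (by linear_combination -hθ)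
  obtain ⟨hθm, hθp⟩ : θ - 3 ≠ 0 ∧ θ + 3 ≠ 0 := by
    refine mul_ne_zero_iff.1 ?_
    rw [show (θ - 3) * (θ + 3) = -(2 * 2 * 3) by linear_combination -hθ]
    exact neg_ne_zero.2 (mul_ne_zero (mul_ne_zero h2 h2) h3)
  obtain ⟨n, hn0, hn⟩ :=
    exists_ne_zero_sq_notMem {-c * (θ + 3) / (θ - 3), -c, -c * (θ - 3) / (θ + 3)} <| by
      have := Finset.card_le_three (a := -c * (θ + 3) / (θ - 3)) (b := -c)
        (c := -c * (θ - 3) / (θ + 3))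
      omega
  simp only [Finset.mem_insert, Finset.mem_singleton, not_or] at hn
  obtain ⟨hn1, hn2, hn3⟩ := hn
  -- with n * m = c, 2a + b = n + m and θ b = n - m we get 4 (a^2 + ab + b^2) = (n + m)^2 - (n - m)^2
  obtain ⟨m, hm⟩ : ∃ m : K, n * m = c := ⟨c / n, mul_div_cancel₀ _ hn0⟩
  obtain ⟨b, hb⟩ : ∃ b : K, θ * b = n - m := ⟨(n - m) / θ, mul_div_cancel₀ _ hθ0⟩
  obtain ⟨a, ha⟩ : ∃ a : K, 2 * a = n + m - b := ⟨(n + m - b) / 2, mul_div_cancel₀ _ h2⟩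
  refine ⟨a, b, ?_, fun h => hn1 ?_, fun h => hn2 ?_, fun h => hn3 ?_⟩
  · apply mul_left_cancel₀ (mul_ne_zero h2 h2)
    linear_combination (2 * a + n + m + b) * ha - (θ * b + n - m) * hb - b ^ 2 * hθ + 4 * hm
  · rw [eq_div_iff hθm]
    linear_combination n * (3 * hb - θ * ha + 2 * θ * h) - (θ + 3) * hm
  · linear_combination n * (h - ha) - hm
  · rw [eq_div_iff hθp]
    linear_combination n * (2 * θ * h - θ * ha - 3 * hb) - (θ - 3) * hm

theorem exists_distinct_sum_eq_sum_sq_eq {K : Type*} [Field K] [Finite K] (h2 : (2 : K) ≠ 0)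
    (h3 : (3 : K) ≠ 0) (hsq : IsSquare (-3 : K)) (hcard : 8 ≤ Nat.card K) (u v : K) :
    ∃ x y z : K, x ≠ y ∧ x ≠ z ∧ y ≠ z ∧ x + y + z = u ∧ x ^ 2 + y ^ 2 + z ^ 2 = v := by
  obtain ⟨a, b, hab, hne, h2ab, ha2b⟩ :=
    exists_sq_add_mul_add_sq_eq h2 h3 hsq hcard ((3 * v - u ^ 2) / (2 * 3))
  refine ⟨u / 3 + a, u / 3 + b, u / 3 - a - b, fun h => hne (by linear_combination h),
    fun h => h2ab (by linear_combination h), fun h => ha2b (by linear_combination h), ?_, ?_⟩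
  · field_simp
    ring
  · rw [eq_div_iff (mul_ne_zero h2 h3)] at hab
    field_simp
    linear_combination 3 * hab

theorem isSumOfThreeDistinct_parabola {K : Type*} [Field K] [Finite K] (h2 : (2 : K) ≠ 0)
    (h3 : (3 : K) ≠ 0) (hsq : IsSquare (-3 : K)) (hcard : 8 ≤ Nat.card K) (w : K × K) :
    IsSumOfThreeDistinct (parabola K) w := by
  obtain ⟨x, y, z, hxy, hxz, hyz, hsum, hsq⟩ :=
    exists_distinct_sum_eq_sum_sq_eq h2 h3 hsq hcard w.1 w.2
  exact ⟨_, ⟨x, rfl⟩, _, ⟨y, rfl⟩, _, ⟨z, rfl⟩, fun h => hxy congr($h.1),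
    fun h => hxz congr($h.1), fun h => hyz congr($h.1), Prod.ext hsum hsq⟩

theorem GaloisField.isSumOfThreeDistinct_parabola {p : ℕ} [Fact p.Prime] (hp3 : 3 < p) {k : ℕ}
    (hk : 0 < k) (w : GaloisField p (2 * k) × GaloisField p (2 * k)) :
    IsSumOfThreeDistinct (parabola (GaloisField p (2 * k))) w := by
  have hcard : Nat.card (GaloisField p (2 * k)) = p ^ (2 * k) := GaloisField.card p _ (by omega)
  have h2 : (2 : GaloisField p (2 * k)) ≠ 0 := by
    exact_mod_cast CharP.natCast_ne_zero_of_lt p two_pos (by omega)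
  have h3 : (3 : GaloisField p (2 * k)) ≠ 0 := by
    exact_mod_cast CharP.natCast_ne_zero_of_lt p three_pos hp3
  refine _root_.isSumOfThreeDistinct_parabola h2 h3 ?_ ?_ w
  · refine FiniteField.isSquare_of_pow_eq_self ((Fact.out : p.Prime).odd_of_ne_two (by omega))
      hcard ?_
    simpa [frobenius_def] using map_intCast (frobenius (GaloisField p (2 * k)) p) (-3)
  · rw [hcard]
    calc 8 ≤ p ^ 2 := by nlinarith
      _ ≤ p ^ (2 * k) := Nat.pow_le_pow_right (by omega) (by omega)

/-- For `p` prime with `p > 3`, `q = p^h`, and `p^{2hM0}` sufficiently large,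
there exists a Sidon set `S` in `G = {f ∈ F_q[t] : deg f < 4M0}` such that
every `g ∈ G` is a sum of three pairwise distinct elements of `S`. -/
theorem stmt_5 : ∃ Cbound : ℕ, ∀ (p h M0 : ℕ), p.Prime → 3 < p → 0 < h → 0 < M0 →
    Cbound ≤ p ^ (2 * h * M0) →
    ∀ (F : Type) [Field F] [Fintype F], Fintype.card F = p ^ h →
    ∃ S : Set (Polynomial F),
      (∀ f ∈ S, f.degree < (4 * M0 : ℕ)) ∧
      (∀ a ∈ S, ∀ b ∈ S, ∀ c ∈ S, ∀ d ∈ S,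
        a - b = c - d → a - b ≠ 0 → a = c ∧ b = d) ∧
      (∀ g : Polynomial F, g.degree < (4 * M0 : ℕ) →
        ∃ s1 ∈ S, ∃ s2 ∈ S, ∃ s3 ∈ S,
          s1 ≠ s2 ∧ s1 ≠ s3 ∧ s2 ≠ s3 ∧ s1 + s2 + s3 = g) := by
  -- `Cbound = 0` works: `K` has `p ^ (2 h M0) ≥ 25 > 7` elements since `p ≥ 5`
  refine ⟨0, fun p h M0 hp hp3 hh hM0 _ F _ _ hcardF => ?_⟩
  have : Fact p.Prime := ⟨hp⟩
  have : CharP F p := charP_of_card_eq_prime_pow hcardF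
  let : Algebra (ZMod p) F := ZMod.algebra F p
  let K := GaloisField p (2 * (h * M0))
  have : Finite (degreeLT F (4 * M0)) := Module.finite_of_finite F
  obtain ⟨φ⟩ := ZMod.nonempty_addEquiv_of_natCard_eq p (A := K × K) (B := degreeLT F (4 * M0)) <| by
    rw [Nat.card_prod, natCard_degreeLT, GaloisField.card p _ (by positivity),
      Nat.card_eq_fintype_card, hcardF]
    ring
  let ψ : K × K →+ F[X] := (degreeLT F (4 * M0)).subtype.toAddMonoidHom.comp φ.toAddMonoidHom
  have hψ : Function.Injective ψ := Subtype.val_injective.comp φ.injective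
  have h2 : (2 : K) ≠ 0 := by exact_mod_cast CharP.natCast_ne_zero_of_lt p two_pos (by omega)
  refine ⟨ψ '' parabola K, ?_, (isSidon_parabola h2).image hψ, fun g hg => ?_⟩
  · rintro _ ⟨w, -, rfl⟩
    exact mem_degreeLT.1 (φ w).2
  · obtain ⟨w, rfl⟩ : ∃ w, ψ w = g := ⟨φ.symm ⟨g, mem_degreeLT.2 hg⟩, by simp [ψ]⟩
    exact (GaloisField.isSumOfThreeDistinct_parabola hp3 (by positivity) w).image hψ
end

section
/- Let q be a prime power and 1/2 < γ < 2/3. There is a constant C depending only on γ and q such that for every nonzero b ∈ F_q[t], ∑_{x ∈ F_q[t], x ≠ 0} q^{-2γ deg x} · q^{(1-2γ) deg(x+b)} ≤ C · q^{(1-2γ) deg b}. -/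
/-!
Write `a = deg x`, `c = deg (x + b)`, `m = deg b` and `α = γ + 1/2 > 1`. Since the two largest of
`a, c, m` coincide, each summand `q^{-2γa} q^{(1-2γ)c}` is at most `q^{(1-2γ)m} (q^{-αa} + q^{-αc})`:
if `c ≥ m` use `q^{(1-2γ)c} ≤ q^{(1-2γ)m}` and `2γ ≥ α`, otherwise `a = m > c`. Summing over all `x`,
both terms contribute `∑_x q^{-α deg x}`, which converges because there are at most `q^{d+1}`
polynomials of degree `d`.
-/

open Polynomial Finset

namespace Polynomial

variable {R : Type*}

theorem card_le_of_forall_natDegree_le [Semiring R] [Fintype R] {s : Finset R[X]} {d : ℕ}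
    (hs : ∀ x ∈ s, x.natDegree ≤ d) : #s ≤ Fintype.card R ^ (d + 1) := by
  classical
  have hinj : Set.InjOn (fun (x : R[X]) (i : Fin (d + 1)) => x.coeff i) s := by
    intro x hx y hy hxy
    ext n
    rcases lt_or_ge n (d + 1) with hn | hn
    · exact congrFun hxy ⟨n, hn⟩
    · rw [coeff_eq_zero_of_natDegree_lt ((hs x hx).trans_lt hn),
        coeff_eq_zero_of_natDegree_lt ((hs y hy).trans_lt hn)]
  simpa using card_le_card_of_injOn _ (fun _ _ => mem_coe.2 (mem_univ _)) hinj

theorem summable_card_rpow_neg_mul_natDegree [Semiring R] [Fintype R] [Nontrivial R] {α : ℝ}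
    (hα : 1 < α) : Summable fun x : R[X] => (Fintype.card R : ℝ) ^ (-α * x.natDegree) := by
  classical
  set q : ℝ := (Fintype.card R : ℝ)
  have hq : 1 < q := Nat.one_lt_cast.2 Fintype.one_lt_card
  set r : ℝ := q ^ (1 - α)
  have hr0 : 0 ≤ r := by positivity
  have hr1 : r < 1 := Real.rpow_lt_one_of_one_lt_of_neg hq (by linarith)
  have hfiber : ∀ (u : Finset R[X]) (d : ℕ),
      ∑ x ∈ u with x.natDegree = d, q ^ (-α * x.natDegree) ≤ q * r ^ d := by
    intro u d
    have hcard : (#{x ∈ u | x.natDegree = d} : ℝ) ≤ q ^ (d + 1) := by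
      have h := card_le_of_forall_natDegree_le (s := {x ∈ u | x.natDegree = d})
        fun x hx => (mem_filter.1 hx).2.le
      simp only [q]
      exact_mod_cast h
    calc ∑ x ∈ u with x.natDegree = d, q ^ (-α * x.natDegree)
        = #{x ∈ u | x.natDegree = d} * q ^ (-α * d) := by
          rw [sum_congr rfl fun x hx => by rw [(mem_filter.1 hx).2], sum_const, nsmul_eq_mul]
      _ ≤ q ^ (d + 1) * q ^ (-α * d) := by gcongr
      _ = q * r ^ d := by
          rw [pow_succ', mul_assoc, ← Real.rpow_natCast, ← Real.rpow_add (by positivity),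
            ← Real.rpow_natCast r, ← Real.rpow_mul (by positivity)]
          ring_nf
  refine summable_of_sum_le (c := q * (1 - r)⁻¹) (fun _ => by positivity) fun u => ?_
  set N := u.sup natDegree
  have hmaps : ∀ x ∈ u, x.natDegree ∈ range (N + 1) :=
    fun x hx => mem_range.2 (Nat.lt_succ_of_le (le_sup hx))
  calc ∑ x ∈ u, q ^ (-α * x.natDegree)
      = ∑ d ∈ range (N + 1), ∑ x ∈ u with x.natDegree = d, q ^ (-α * x.natDegree) :=
        (sum_fiberwise_of_maps_to hmaps _).symm
    _ ≤ ∑ d ∈ range (N + 1), q * r ^ d := sum_le_sum fun d _ => hfiber u d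
    _ = q * ∑ d ∈ Ico 0 (N + 1), r ^ d := by rw [mul_sum, range_eq_Ico]
    _ ≤ q * (1 - r)⁻¹ := by
        gcongr
        simpa using geom_sum_Ico_le_of_lt_one (m := 0) (n := N + 1) hr0 hr1

end Polynomial

theorem exponent_le_of_ultrametric {γ a c m : ℝ} (hγ : 1 / 2 ≤ γ) (ha : 0 ≤ a) (hc : 0 ≤ c)
    (hm : m ≤ max a c) (ha' : a ≤ max c m) :
    -(2 * γ) * a + (1 - 2 * γ) * c ≤ (1 - 2 * γ) * m + -(γ + 1 / 2) * a ∨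
      -(2 * γ) * a + (1 - 2 * γ) * c ≤ (1 - 2 * γ) * m + -(γ + 1 / 2) * c := by
  rcases le_or_gt m c with hmc | hcm
  · left
    nlinarith
  · right
    have ham : a = m := le_antisymm (ha'.trans (max_le hcm.le le_rfl))
      ((le_max_iff.1 hm).resolve_right hcm.not_ge)
    subst ham
    nlinarith

theorem Polynomial.rpow_natDegree_mul_rpow_natDegree_add_le {R : Type*} [Ring R] {q γ : ℝ}
    (hq : 1 ≤ q) (hγ : 1 / 2 ≤ γ) (x b : R[X]) :
    q ^ (-(2 * γ) * x.natDegree) * q ^ ((1 - 2 * γ) * (x + b).natDegree) ≤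
      q ^ ((1 - 2 * γ) * b.natDegree) *
        (q ^ (-(γ + 1 / 2) * x.natDegree) + q ^ (-(γ + 1 / 2) * (x + b).natDegree)) := by
  have hq0 : 0 < q := by linarith
  have hm : (b.natDegree : ℝ) ≤ max (x.natDegree : ℝ) ((x + b).natDegree) := by
    have := natDegree_sub_le (x + b) x
    rw [add_sub_cancel_left, max_comm] at this
    exact_mod_cast this
  have ha : (x.natDegree : ℝ) ≤ max ((x + b).natDegree : ℝ) b.natDegree := by
    have := natDegree_sub_le (x + b) b
    rw [add_sub_cancel_right] at this
    exact_mod_cast this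
  rw [← Real.rpow_add hq0, mul_add, ← Real.rpow_add hq0, ← Real.rpow_add hq0]
  rcases exponent_le_of_ultrametric hγ (Nat.cast_nonneg _) (Nat.cast_nonneg _) hm ha with h | h
  · exact (Real.rpow_le_rpow_of_exponent_le hq h).trans (le_add_of_nonneg_right (by positivity))
  · exact (Real.rpow_le_rpow_of_exponent_le hq h).trans (le_add_of_nonneg_left (by positivity))

theorem stmt_13_general (F : Type*) [Field F] [Fintype F] (γ : ℝ)
    (hγ1 : 1 / 2 < γ) :
    ∃ C : ℝ, 0 < C ∧ ∀ (b : Polynomial F), b ≠ 0 →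
      ∑' x : {x : Polynomial F // x ≠ 0 ∧ x + b ≠ 0},
          (Fintype.card F : ℝ) ^ (-(2 * γ) * ((x : Polynomial F).natDegree : ℝ)) *
            (Fintype.card F : ℝ) ^ ((1 - 2 * γ) * (((x : Polynomial F) + b).natDegree : ℝ))
        ≤ C * (Fintype.card F : ℝ) ^ ((1 - 2 * γ) * (b.natDegree : ℝ)) := by
  set q : ℝ := (Fintype.card F : ℝ)
  have hq : 1 ≤ q := Nat.one_le_cast.2 Fintype.card_pos
  set w : F[X] → ℝ := fun x => q ^ (-(γ + 1 / 2) * x.natDegree)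
  have hw : Summable w := summable_card_rpow_neg_mul_natDegree (by linarith)
  have hw0 : 0 < ∑' x, w x := hw.tsum_pos (fun _ => by positivity) 0 (by positivity)
  refine ⟨2 * ∑' x, w x, mul_pos two_pos hw0, fun b _ => ?_⟩
  set g : F[X] → ℝ := fun x => q ^ (-(2 * γ) * x.natDegree) * q ^ ((1 - 2 * γ) * (x + b).natDegree)
  have hbound : ∀ x, g x ≤ q ^ ((1 - 2 * γ) * b.natDegree) * (w x + w (x + b)) :=
    fun x => rpow_natDegree_mul_rpow_natDegree_add_le hq hγ1.le x b
  have hwb : Summable fun x => w (x + b) := hw.comp_injective (add_left_injective b)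
  have hshift : ∑' x, w (x + b) = ∑' x, w x := (Equiv.addRight b).tsum_eq w
  have hmajorant : Summable fun x => q ^ ((1 - 2 * γ) * b.natDegree) * (w x + w (x + b)) :=
    (hw.add hwb).mul_left _
  have hg : Summable g := .of_nonneg_of_le (fun _ => by positivity) hbound hmajorant
  calc ∑' x : {x : F[X] // x ≠ 0 ∧ x + b ≠ 0}, g x
      ≤ ∑' x, g x := hg.tsum_subtype_le g _ (fun _ => by positivity)
    _ ≤ ∑' x, q ^ ((1 - 2 * γ) * b.natDegree) * (w x + w (x + b)) :=
        hg.tsum_le_tsum hbound hmajorant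
    _ = 2 * (∑' x, w x) * q ^ ((1 - 2 * γ) * b.natDegree) := by
        rw [tsum_mul_left, hw.tsum_add hwb, hshift]
        ring

/-- Lemma (basic 2, second part, `a = 0`): for `1/2 < γ < 2/3`, there is a
constant `C = C(γ, q)` such that for every nonzero `b ∈ F_q[t]`,
`∑_{x ≠ 0} q^{-2γ deg x} q^{(1-2γ) deg(x+b)} ≤ C q^{(1-2γ) deg b}`
(the term with `x + b = 0` contributes zero). -/
theorem stmt_13 (F : Type*) [Field F] [Fintype F] (γ : ℝ)
    (hγ1 : 1 / 2 < γ) (hγ2 : γ < 2 / 3) :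
    ∃ C : ℝ, 0 < C ∧ ∀ (b : Polynomial F), b ≠ 0 →
      ∑' x : {x : Polynomial F // x ≠ 0 ∧ x + b ≠ 0},
          (Fintype.card F : ℝ) ^ (-(2 * γ) * ((x : Polynomial F).natDegree : ℝ)) *
            (Fintype.card F : ℝ) ^ ((1 - 2 * γ) * (((x : Polynomial F) + b).natDegree : ℝ))
        ≤ C * (Fintype.card F : ℝ) ^ ((1 - 2 * γ) * (b.natDegree : ℝ)) :=
  stmt_13_general F γ hγ1
end
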